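/- Every vertex of K is attained by a leader: if v is an extreme point of K, then there exist a token index i and a time k ∈ ℕ such that C_i^k = {i} (so z_i is a leader) and v = z_i^k. -/

import Mathlib

/-!
Each step moves a token towards the mean of the tokens it attends to, so the convex hulls of the
configurations decrease, and the squared norm of a token grows by at least `θ² ‖mean - token‖²`
per step (`θ = α / (1 + α)`). Being bounded, these norms converge, so every step vanishes.
Along a subsequence the configurations converge to some `w` with constant attention sets. An
extreme point `v` of `K` lies in the convex hull of the `w j`, hence equals one of them, and the
group of tokens with limit `v` is closed under attention: the limit of a token is the mean of the
limits of the tokens it attends to, and `v` is extreme. Tokens stay pairwise distinct, so the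
token of largest norm in that group attends only to itself. It is a leader, leaders never move,
and so it sits at `v`.
-/

open scoped RealInnerProductSpace BigOperators Classical
open Filter Metric

noncomputable section

/-- The hardmax attention (argmax) index set `C_i` for a token configuration `z`
(attention matrix `A = I`): the set of indices `j` maximizing `⟪z_i, z_j⟫`. -/
def attn {d n : ℕ} (z : Fin n → EuclideanSpace ℝ (Fin d)) (i : Fin n) : Finset (Fin n) :=
  Finset.univ.filter fun j => (⟪z i, z j⟫ = ⨆ ℓ, ⟪z i, z ℓ⟫)

/-- The pure-attention hardmax transformer dynamics with step-size `α > 0` and `A = I`: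
`z_i^{k+1} = z_i^k + (α/(1+α))·(1/|C_i^k|)·Σ_{j ∈ C_i^k} (z_j^k − z_i^k)`. -/
def IsDyn {d n : ℕ} (α : ℝ) (z : ℕ → Fin n → EuclideanSpace ℝ (Fin d)) : Prop :=
  ∀ k i, z (k + 1) i = z k i +
    (α / (1 + α)) • (((attn (z k) i).card : ℝ)⁻¹ • ∑ j ∈ attn (z k) i, (z k j - z k i))

/-- The limiting set `K = ⋂ₖ co(Z^k)`, the intersection of the convex hulls of the token
configurations over all times. -/
def limitK {d n : ℕ} (z : ℕ → Fin n → EuclideanSpace ℝ (Fin d)) :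
    Set (EuclideanSpace ℝ (Fin d)) :=
  ⋂ k, convexHull ℝ (Set.range (z k))

open Topology

section Convex

variable {𝕜 ι E : Type*} [Field 𝕜] [LinearOrder 𝕜] [IsStrictOrderedRing 𝕜]
  [AddCommGroup E] [Module 𝕜 E]

theorem Convex.eq_of_sum_smul_eq_mem_extremePoints {A : Set E} (hA : Convex 𝕜 A) {x : E}
    (hx : x ∈ A.extremePoints 𝕜) {s : Finset ι} {w : ι → 𝕜} {p : ι → E}
    (hw₀ : ∀ i ∈ s, 0 ≤ w i) (hw₁ : ∑ i ∈ s, w i = 1) (hp : ∀ i ∈ s, p i ∈ A)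
    (hsum : ∑ i ∈ s, w i • p i = x) {j : ι} (hj : j ∈ s) (hwj : w j ≠ 0) : p j = x := by
  set t := s.erase j
  have hsplit : w j + ∑ i ∈ t, w i = 1 := by rw [Finset.add_sum_erase _ _ hj, hw₁]
  have ht₀ : ∀ i ∈ t, 0 ≤ w i := fun i hi => hw₀ i (Finset.mem_of_mem_erase hi)
  rcases (Finset.sum_nonneg ht₀).eq_or_lt with ht | ht
  · have hzero : ∀ i ∈ t, w i = 0 := (Finset.sum_eq_zero_iff_of_nonneg ht₀).1 ht.symm
    rw [← hsum, ← Finset.add_sum_erase _ _ hj,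
      Finset.sum_eq_zero fun i hi => by rw [hzero i hi, zero_smul], add_zero,
      show w j = 1 by linarith, one_smul]
  · have hq : t.centerMass w p ∈ A :=
      hA.centerMass_mem ht₀ ht fun i hi => hp i (Finset.mem_of_mem_erase hi)
    rw [← Finset.centerMass_eq_of_sum_1 _ _ hw₁, ← Finset.insert_erase hj,
      Finset.centerMass_insert _ _ _ (Finset.notMem_erase j s) ht.ne',
      hsplit, div_one, div_one] at hsum
    exact hx.2 (hp j hj) hq ⟨w j, _, (hw₀ j hj).lt_of_ne' hwj, ht, hsplit, hsum⟩

theorem exists_mem_stdSimplex_of_mem_convexHull_range [Fintype ι] {y : ι → E} {v : E}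
    (hv : v ∈ convexHull 𝕜 (Set.range y)) : ∃ a ∈ stdSimplex 𝕜 ι, ∑ i, a i • y i = v := by
  have hsub :
      convexHull 𝕜 (Set.range y) ⊆ Fintype.linearCombination 𝕜 y '' stdSimplex 𝕜 ι :=
    convexHull_min (Set.range_subset_iff.2 fun i => ⟨Pi.single i 1, single_mem_stdSimplex 𝕜 i,
      by rw [Fintype.linearCombination_apply_single, one_smul]⟩)
      ((convex_stdSimplex 𝕜 ι).linear_image _)
  obtain ⟨a, ha, rfl⟩ := hsub hv
  exact ⟨a, ha, (Fintype.linearCombination_apply _ _ _).symm⟩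

end Convex

theorem mem_convexHull_range_of_tendsto {ι E : Type*} [Fintype ι] [AddCommGroup E] [Module ℝ E]
    [TopologicalSpace E] [ContinuousAdd E] [ContinuousSMul ℝ E] [T2Space E] {y : ℕ → ι → E}
    {w : ι → E} (hy : Tendsto y atTop (𝓝 w)) {v : E}
    (hv : ∀ m, v ∈ convexHull ℝ (Set.range (y m))) : v ∈ convexHull ℝ (Set.range w) := by
  choose a ha hav using fun m => exists_mem_stdSimplex_of_mem_convexHull_range (hv m)
  obtain ⟨b, hb, ψ, hψ, hab⟩ := (isCompact_stdSimplex ℝ ι).tendsto_subseq ha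
  have hlim : Tendsto (fun m => ∑ i, a (ψ m) i • y (ψ m) i) atTop (𝓝 (∑ i, b i • w i)) :=
    tendsto_finsetSum _ fun i _ =>
      (tendsto_pi_nhds.1 hab i).smul (tendsto_pi_nhds.1 (hy.comp hψ.tendsto_atTop) i)
  simp only [hav] at hlim
  exact mem_convexHull_of_exists_fintype b w hb.1 hb.2 Set.mem_range_self
    (tendsto_nhds_unique hlim tendsto_const_nhds)

section Attention

variable {d n : ℕ} {x : Fin n → EuclideanSpace ℝ (Fin d)} {i j : Fin n}

theorem mem_attn_iff : j ∈ attn x i ↔ ∀ ℓ, ⟪x i, x ℓ⟫ ≤ ⟪x i, x j⟫ := by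
  have : Nonempty (Fin n) := ⟨i⟩
  have hbdd : BddAbove (Set.range fun ℓ => ⟪x i, x ℓ⟫) := (Set.finite_range _).bddAbove
  simp only [attn, Finset.mem_filter, Finset.mem_univ, true_and]
  exact ⟨fun h ℓ => h ▸ le_ciSup hbdd ℓ,
    fun h => le_antisymm (le_ciSup hbdd j) (ciSup_le h)⟩

theorem attn_nonempty (x : Fin n → EuclideanSpace ℝ (Fin d)) (i : Fin n) :
    (attn x i).Nonempty := by
  have : Nonempty (Fin n) := ⟨i⟩
  obtain ⟨j, hj⟩ := Finite.exists_max fun ℓ => ⟪x i, x ℓ⟫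
  exact ⟨j, mem_attn_iff.2 hj⟩

theorem inner_le_of_mem_attn (hj : j ∈ attn x i) {y : EuclideanSpace ℝ (Fin d)}
    (hy : y ∈ convexHull ℝ (Set.range x)) : ⟪x i, y⟫ ≤ ⟪x i, x j⟫ := by
  have hconv : Convex ℝ {y | ⟪x i, y⟫ ≤ ⟪x i, x j⟫} :=
    convex_halfSpace_le
      ⟨fun _ _ => inner_add_right _ _ _, fun _ _ => real_inner_smul_right _ _ _⟩ _
  have hmax : ∀ ℓ, ⟪x i, x ℓ⟫ ≤ ⟪x i, x j⟫ := mem_attn_iff.1 hj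
  exact convexHull_min (Set.range_subset_iff.2 hmax) hconv hy

theorem attn_eq_singleton_iff : attn x i = {i} ↔ ∀ j ≠ i, ⟪x i, x j⟫ < ⟪x i, x i⟫ := by
  constructor
  · intro h j hj
    have hji : j ∉ attn x i := by simpa [h] using hj
    obtain ⟨ℓ, hℓ⟩ := not_forall.1 (mt mem_attn_iff.2 hji)
    exact (not_le.1 hℓ).trans_le (mem_attn_iff.1 (h ▸ Finset.mem_singleton_self i) ℓ)
  · intro h
    ext j
    rw [mem_attn_iff, Finset.mem_singleton]
    refine ⟨fun hj => by_contra fun hji => (h j hji).not_ge (hj i), ?_⟩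
    rintro rfl ℓ
    rcases eq_or_ne ℓ j with rfl | hℓ
    exacts [le_rfl, (h ℓ hℓ).le]

/-- Take `q` of largest norm in `A`: for `j ∈ attn x q`, `‖x q‖² ≤ ⟪x q, x j⟫` and
`‖x j‖ ≤ ‖x q‖` force `x j = x q`. -/
theorem exists_attn_eq_singleton_of_attn_subset (hx : Function.Injective x)
    {A : Finset (Fin n)} (hA : A.Nonempty) (hAattn : ∀ p ∈ A, attn x p ⊆ A) :
    ∃ q ∈ A, attn x q = {q} := by
  obtain ⟨q, hqA, hq⟩ := A.exists_max_image (fun j => ‖x j‖) hA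
  refine ⟨q, hqA, (attn_nonempty x q).subset_singleton_iff.1 fun j hj => ?_⟩
  have hnorm : ‖x j‖ ^ 2 ≤ ‖x q‖ ^ 2 :=
    pow_le_pow_left₀ (norm_nonneg _) (hq j (hAattn q hqA hj)) 2
  have hinner : ‖x q‖ ^ 2 ≤ ⟪x q, x j⟫ := by
    rw [← real_inner_self_eq_norm_sq]; exact mem_attn_iff.1 hj q
  have hdist : ‖x q - x j‖ ^ 2 ≤ 0 := by rw [norm_sub_sq_real]; linarith
  have hzero : ‖x q - x j‖ = 0 := by nlinarith [norm_nonneg (x q - x j)]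
  exact Finset.mem_singleton.2 (hx (norm_sub_eq_zero_iff.1 hzero)).symm

def attnMean (x : Fin n → EuclideanSpace ℝ (Fin d)) (i : Fin n) : EuclideanSpace ℝ (Fin d) :=
  ((attn x i).card : ℝ)⁻¹ • ∑ j ∈ attn x i, x j

theorem attnMean_mem_convexHull : attnMean x i ∈ convexHull ℝ (Set.range x) := by
  have hcard : (0 : ℝ) < (attn x i).card := by exact_mod_cast (attn_nonempty x i).card_pos
  rw [attnMean, Finset.smul_sum]
  refine (convex_convexHull ℝ _).sum_mem (fun _ _ => by positivity) ?_
    fun j _ => subset_convexHull ℝ _ (Set.mem_range_self j)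
  rw [Finset.sum_const, nsmul_eq_mul, mul_inv_cancel₀ hcard.ne']

theorem inner_attnMean (hj : j ∈ attn x i) : ⟪x i, attnMean x i⟫ = ⟪x i, x j⟫ := by
  have hcard : ((attn x i).card : ℝ) ≠ 0 := by exact_mod_cast (attn_nonempty x i).card_ne_zero
  have hall : ∀ ℓ ∈ attn x i, ⟪x i, x ℓ⟫ = ⟪x i, x j⟫ := fun ℓ hℓ =>
    le_antisymm (mem_attn_iff.1 hj ℓ) (mem_attn_iff.1 hℓ j)
  rw [attnMean, real_inner_smul_right, inner_sum, Finset.sum_congr rfl hall, Finset.sum_const,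
    nsmul_eq_mul, inv_mul_cancel_left₀ hcard]

theorem inner_le_inner_attnMean {y : EuclideanSpace ℝ (Fin d)}
    (hy : y ∈ convexHull ℝ (Set.range x)) : ⟪x i, y⟫ ≤ ⟪x i, attnMean x i⟫ := by
  obtain ⟨j, hj⟩ := attn_nonempty x i
  rw [inner_attnMean hj]
  exact inner_le_of_mem_attn hj hy

theorem attnMean_eq_self (h : attn x i = {i}) : attnMean x i = x i := by
  simp [attnMean, h]

end Attention

section Step

variable {d n : ℕ} {θ : ℝ} {x : Fin n → EuclideanSpace ℝ (Fin d)} {i : Fin n}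

def attnStep (θ : ℝ) (x : Fin n → EuclideanSpace ℝ (Fin d)) (i : Fin n) :
    EuclideanSpace ℝ (Fin d) :=
  x i + θ • (attnMean x i - x i)

theorem attnStep_mem_convexHull (hθ₀ : 0 ≤ θ) (hθ₁ : θ ≤ 1) :
    attnStep θ x i ∈ convexHull ℝ (Set.range x) :=
  (convex_convexHull ℝ _).add_smul_sub_mem (subset_convexHull ℝ _ (Set.mem_range_self i))
    attnMean_mem_convexHull ⟨hθ₀, hθ₁⟩

theorem norm_sq_add_le_norm_attnStep_sq (hθ₀ : 0 ≤ θ) :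
    ‖x i‖ ^ 2 + θ ^ 2 * ‖attnMean x i - x i‖ ^ 2 ≤ ‖attnStep θ x i‖ ^ 2 := by
  have hgain : 0 ≤ ⟪x i, attnMean x i - x i⟫ := by
    rw [inner_sub_right, sub_nonneg]
    exact inner_le_inner_attnMean (subset_convexHull ℝ _ (Set.mem_range_self i))
  rw [attnStep, norm_add_sq_real, real_inner_smul_right, norm_smul, mul_pow, Real.norm_eq_abs,
    sq_abs]
  nlinarith

theorem attnStep_injective (hθ₀ : 0 ≤ θ) (hθ₁ : θ < 1) (hx : Function.Injective x) :
    Function.Injective (attnStep θ x) := by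
  intro i j hij
  by_contra hne
  set u := x i - x j
  have hu : 0 < ‖u‖ := norm_pos_iff.2 (sub_ne_zero.2 (hx.ne hne))
  have hmove : (1 - θ) • u = θ • (attnMean x j - attnMean x i) := by
    simp only [attnStep] at hij
    linear_combination (norm := module) hij
  have hmono : ⟪u, attnMean x j - attnMean x i⟫ ≤ 0 := by
    have hi := inner_le_inner_attnMean (i := i) (attnMean_mem_convexHull (x := x) (i := j))
    have hj := inner_le_inner_attnMean (i := j) (attnMean_mem_convexHull (x := x) (i := i))
    simp only [u, inner_sub_left, inner_sub_right]
    linarith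
  have hcontra : (1 - θ) * ‖u‖ ^ 2 ≤ 0 := by
    rw [← real_inner_self_eq_norm_sq, ← real_inner_smul_right, hmove, real_inner_smul_right]
    exact mul_nonpos_of_nonneg_of_nonpos hθ₀ hmono
  nlinarith [mul_pos (sub_pos.2 hθ₁) (pow_pos hu 2)]

theorem attnStep_eq_self (h : attn x i = {i}) : attnStep θ x i = x i := by
  simp [attnStep, attnMean_eq_self h]

theorem attn_attnStep_eq_singleton (hθ₀ : 0 ≤ θ) (hθ₁ : θ < 1) (h : attn x i = {i}) :
    attn (attnStep θ x) i = {i} := by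
  rw [attn_eq_singleton_iff, attnStep_eq_self h]
  intro j hj
  have hlt := attn_eq_singleton_iff.1 h j hj
  have hle : ⟪x i, attnMean x j⟫ ≤ ⟪x i, x i⟫ :=
    inner_le_of_mem_attn (h ▸ Finset.mem_singleton_self i) attnMean_mem_convexHull
  rw [attnStep, inner_add_right, real_inner_smul_right, inner_sub_right]
  nlinarith

end Step

theorem div_one_add_mem_Ico {α : ℝ} (hα : 0 ≤ α) : α / (1 + α) ∈ Set.Ico 0 1 :=
  ⟨div_nonneg hα (by linarith), (div_lt_one (by linarith)).2 (by linarith)⟩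

theorem convex_limitK {d n : ℕ} (z : ℕ → Fin n → EuclideanSpace ℝ (Fin d)) :
    Convex ℝ (limitK z) :=
  convex_iInter fun _ => convex_convexHull ℝ _

theorem exists_subseq_tendsto_attn_eq {d n : ℕ} {z : ℕ → Fin n → EuclideanSpace ℝ (Fin d)}
    {S : Set (Fin n → EuclideanSpace ℝ (Fin d))} (hS : IsCompact S) (hz : ∀ k, z k ∈ S) :
    ∃ φ : ℕ → ℕ, StrictMono φ ∧ ∃ w, Tendsto (z ∘ φ) atTop (𝓝 w) ∧
      ∃ C : Fin n → Finset (Fin n), ∀ m, attn (z (φ m)) = C := by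
  obtain ⟨C, hC⟩ := Finite.exists_infinite_fiber fun k => attn (z k)
  obtain ⟨ψ, hψ, hψC⟩ := extraction_of_frequently_atTop
    (Nat.frequently_atTop_iff_infinite.2 (Set.infinite_coe_iff.1 hC))
  obtain ⟨w, -, φ, hφ, hw⟩ := hS.tendsto_subseq fun m => hz (ψ m)
  exact ⟨ψ ∘ φ, hψ.comp hφ, w, hw, C, fun m => hψC (φ m)⟩

namespace IsDyn

variable {d n : ℕ} {α : ℝ} {z : ℕ → Fin n → EuclideanSpace ℝ (Fin d)}

theorem succ_eq (h : IsDyn α z) (k : ℕ) : z (k + 1) = attnStep (α / (1 + α)) (z k) := by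
  funext i
  have hcard : ((attn (z k) i).card : ℝ) ≠ 0 := by
    exact_mod_cast (attn_nonempty _ i).card_ne_zero
  rw [h k i, attnStep, attnMean, Finset.sum_sub_distrib, Finset.sum_const, smul_sub,
    ← Nat.cast_smul_eq_nsmul ℝ, smul_smul, inv_mul_cancel₀ hcard, one_smul]

theorem convexHull_antitone (h : IsDyn α z) (hα : 0 ≤ α) :
    Antitone fun k => convexHull ℝ (Set.range (z k)) := by
  refine antitone_nat_of_succ_le fun k => convexHull_min ?_ (convex_convexHull ℝ _)
  rw [h.succ_eq, Set.range_subset_iff]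
  have hθ := div_one_add_mem_Ico hα
  exact fun i => attnStep_mem_convexHull hθ.1 hθ.2.le

theorem mem_convexHull (h : IsDyn α z) (hα : 0 ≤ α) {k l : ℕ} (hkl : k ≤ l) (i : Fin n) :
    z l i ∈ convexHull ℝ (Set.range (z k)) :=
  h.convexHull_antitone hα hkl (subset_convexHull ℝ _ (Set.mem_range_self i))

theorem injective (h : IsDyn α z) (hα : 0 ≤ α) (h₀ : Function.Injective (z 0)) (k : ℕ) :
    Function.Injective (z k) := by
  induction k with
  | zero => exact h₀
  | succ k ih =>
    have hθ := div_one_add_mem_Ico hα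
    rw [h.succ_eq]
    exact attnStep_injective hθ.1 hθ.2 ih

theorem attn_eq_singleton_and_eq_of_le (h : IsDyn α z) (hα : 0 ≤ α) {k l : ℕ} {i : Fin n}
    (hk : attn (z k) i = {i}) (hkl : k ≤ l) : attn (z l) i = {i} ∧ z l i = z k i := by
  induction l, hkl using Nat.le_induction with
  | base => exact ⟨hk, rfl⟩
  | succ l _ ih =>
    have hθ := div_one_add_mem_Ico hα
    rw [h.succ_eq]
    exact ⟨attn_attnStep_eq_singleton hθ.1 hθ.2 ih.1, (attnStep_eq_self ih.1).trans ih.2⟩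

theorem tendsto_attnMean_sub (h : IsDyn α z) (hα : 0 < α) (i : Fin n) :
    Tendsto (fun k => attnMean (z k) i - z k i) atTop (𝓝 0) := by
  set θ := α / (1 + α)
  have hθ : 0 < θ := by positivity
  obtain ⟨R, hR⟩ :=
    ((Set.finite_range (z 0)).isCompact_convexHull ℝ).isBounded.exists_norm_le
  set N : ℕ → ℝ := fun k => ‖z k i‖ ^ 2
  have hstep : ∀ k, N k + θ ^ 2 * ‖attnMean (z k) i - z k i‖ ^ 2 ≤ N (k + 1) := fun k => by
    simp only [N, h.succ_eq k]
    exact norm_sq_add_le_norm_attnStep_sq hθ.le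
  have hmono : Monotone N := monotone_nat_of_le_succ fun k => by
    nlinarith [hstep k, sq_nonneg θ, sq_nonneg ‖attnMean (z k) i - z k i‖]
  have hbdd : BddAbove (Set.range N) := ⟨R ^ 2, Set.forall_mem_range.2 fun k =>
    pow_le_pow_left₀ (norm_nonneg _) (hR _ (h.mem_convexHull hα.le (Nat.zero_le k) i)) 2⟩
  have hN := tendsto_atTop_ciSup hmono hbdd
  have hdiff : Tendsto (fun k => (N (k + 1) - N k) / θ ^ 2) atTop (𝓝 0) := by
    simpa using ((hN.comp (tendsto_add_atTop_nat 1)).sub hN).div_const (θ ^ 2)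
  have hsq : Tendsto (fun k => ‖attnMean (z k) i - z k i‖ ^ 2) atTop (𝓝 0) :=
    squeeze_zero (fun k => by positivity)
      (fun k => by rw [le_div_iff₀ (by positivity)]; linarith [hstep k]) hdiff
  rw [tendsto_zero_iff_norm_tendsto_zero]
  simpa using hsq.sqrt

theorem mem_limitK_of_tendsto (h : IsDyn α z) (hα : 0 ≤ α) {φ : ℕ → ℕ}
    (hφ : Tendsto φ atTop atTop) {i : Fin n} {p : EuclideanSpace ℝ (Fin d)}
    (hp : Tendsto (fun m => z (φ m) i) atTop (𝓝 p)) : p ∈ limitK z :=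
  Set.mem_iInter.2 fun k => ((Set.finite_range (z k)).isClosed_convexHull ℝ).mem_of_tendsto hp
    ((hφ.eventually_ge_atTop k).mono fun _ hm => h.mem_convexHull hα hm i)

theorem eq_of_mem_attn_of_tendsto (h : IsDyn α z) (hα : 0 < α) {φ : ℕ → ℕ}
    (hφ : StrictMono φ)
    {w : Fin n → EuclideanSpace ℝ (Fin d)} (hw : Tendsto (z ∘ φ) atTop (𝓝 w))
    {C : Fin n → Finset (Fin n)} (hC : ∀ m, attn (z (φ m)) = C)
    {v : EuclideanSpace ℝ (Fin d)} (hv : v ∈ (limitK z).extremePoints ℝ) {p j : Fin n}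
    (hp : w p = v) (hj : j ∈ C p) : w j = v := by
  have hcard : (0 : ℝ) < (C p).card := by
    rw [← hC 0]; exact_mod_cast (attn_nonempty _ p).card_pos
  have hmean : Tendsto (fun m => attnMean (z (φ m)) p) atTop
      (𝓝 (((C p).card : ℝ)⁻¹ • ∑ j ∈ C p, w j)) := by
    simp only [attnMean, hC]
    exact (tendsto_finsetSum _ fun j _ => tendsto_pi_nhds.1 hw j).const_smul _
  have hlim : ((C p).card : ℝ)⁻¹ • ∑ j ∈ C p, w j = w p := by
    refine tendsto_nhds_unique hmean ?_
    simpa using (tendsto_pi_nhds.1 hw p).add ((h.tendsto_attnMean_sub hα p).comp hφ.tendsto_atTop)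
  refine (convex_limitK z).eq_of_sum_smul_eq_mem_extremePoints hv
    (w := fun _ => ((C p).card : ℝ)⁻¹) (fun _ _ => by positivity) ?_
    (fun j _ => h.mem_limitK_of_tendsto hα.le hφ.tendsto_atTop (tendsto_pi_nhds.1 hw j)) ?_ hj
    (by positivity)
  · simp [hcard.ne']
  · rw [← Finset.smul_sum, hlim, hp]

end IsDyn

theorem vertex_attained_by_leader_general {d n : ℕ} (α : ℝ) (hα : 0 < α)
    (z : ℕ → Fin n → EuclideanSpace ℝ (Fin d)) (hdyn : IsDyn α z)
    (hdist : ∀ i j : Fin n, i ≠ j → z 0 i ≠ z 0 j)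
    (v : EuclideanSpace ℝ (Fin d)) (hv : v ∈ Set.extremePoints ℝ (limitK z)) :
    ∃ (i : Fin n) (k : ℕ), attn (z k) i = {i} ∧ v = z k i := by
  obtain ⟨φ, hφ, w, hw, C, hC⟩ := exists_subseq_tendsto_attn_eq
    (isCompact_univ_pi fun _ => (Set.finite_range (z 0)).isCompact_convexHull ℝ)
    fun k => Set.mem_univ_pi.2 (hdyn.mem_convexHull hα.le (Nat.zero_le k))
  have hwK : Set.range w ⊆ limitK z := Set.range_subset_iff.2 fun j =>
    hdyn.mem_limitK_of_tendsto hα.le hφ.tendsto_atTop (tendsto_pi_nhds.1 hw j)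
  obtain ⟨i₀, hi₀⟩ : v ∈ Set.range w := extremePoints_convexHull_subset
    (inter_extremePoints_subset_extremePoints_of_subset (convexHull_min hwK (convex_limitK z))
      ⟨mem_convexHull_range_of_tendsto hw fun m => Set.iInter_subset _ (φ m) hv.1, hv⟩)
  obtain ⟨q, hq, hlead⟩ := exists_attn_eq_singleton_of_attn_subset
    (hdyn.injective hα.le (fun i j hij => by_contra fun hne => hdist i j hne hij) (φ 0))
    (A := Finset.univ.filter fun j => w j = v) ⟨i₀, by simpa using hi₀⟩ fun p hp j hj => by
      simp only [Finset.mem_filter, Finset.mem_univ, true_and] at hp ⊢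
      exact hdyn.eq_of_mem_attn_of_tendsto hα hφ hw hC hv hp (hC 0 ▸ hj)
  have hfrozen : ∀ m, z (φ m) q = z (φ 0) q := fun m =>
    (hdyn.attn_eq_singleton_and_eq_of_le hα.le hlead (hφ.monotone (Nat.zero_le m))).2
  refine ⟨q, φ 0, hlead, ?_⟩
  rw [← (Finset.mem_filter.1 hq).2]
  exact tendsto_nhds_unique (tendsto_pi_nhds.1 hw q) (by simp [hfrozen])

/-- Every vertex (extreme point) of `K` is attained by a leader. -/
theorem vertex_attained_by_leader {d n : ℕ} (hd : 0 < d) (hn : 0 < n) (α : ℝ) (hα : 0 < α)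
    (z : ℕ → Fin n → EuclideanSpace ℝ (Fin d)) (hdyn : IsDyn α z)
    (hdist : ∀ i j : Fin n, i ≠ j → z 0 i ≠ z 0 j) (hnz : ∀ i, z 0 i ≠ 0)
    (v : EuclideanSpace ℝ (Fin d)) (hv : v ∈ Set.extremePoints ℝ (limitK z)) :
    ∃ (i : Fin n) (k : ℕ), attn (z k) i = {i} ∧ v = z k i :=
  vertex_attained_by_leader_general α hα z hdyn hdist v hv
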